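/- Let 𝔖 be a dilation invariant finite system of polynomial equations with rational coefficients. The following are equivalent: (I) 𝔖 is partition regular over ℕ; (II) 𝔖 is partition regular over every multiplicatively syndetic subset of ℕ; (III) 𝔖 is partition regular over some multiplicatively syndetic subset of ℕ. -/

import Mathlib

open MvPolynomial

/-- `x : ℕ^s` is a solution of the system given by polynomials `p j`:
all entries are positive integers and every polynomial vanishes at `x`. -/
def IsSolution {s k : ℕ} (p : Fin k → MvPolynomial (Fin s) ℚ) (x : Fin s → ℕ) : Prop :=
  (∀ i, 0 < x i) ∧ ∀ j, eval (fun i => (x i : ℚ)) (p j) = 0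

/-- A tuple is non-trivial if its coordinates are not all equal. -/
def IsNontrivial {s : ℕ} (x : Fin s → ℕ) : Prop :=
  ∃ i j, x i ≠ x j

/-- The system is dilation invariant: rational solutions are preserved by dilations. -/
def DilationInvariant {s k : ℕ} (p : Fin k → MvPolynomial (Fin s) ℚ) : Prop :=
  ∀ x : Fin s → ℚ, (∀ j, eval x (p j) = 0) →
    ∀ lam : ℚ, ∀ j, eval (fun i => lam * x i) (p j) = 0

/-- The system is `r`-regular over `X ⊆ ℕ`: every `r`-colouring of ℕ admits a
monochromatic non-trivial solution with all coordinates in `X`. -/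
def RRegularOver {s k : ℕ} (p : Fin k → MvPolynomial (Fin s) ℚ) (X : Set ℕ) (r : ℕ) : Prop :=
  ∀ χ : ℕ → Fin r, ∃ x : Fin s → ℕ, IsSolution p x ∧ IsNontrivial x ∧
    (∀ i, x i ∈ X) ∧ ∀ i j, χ (x i) = χ (x j)

/-- The system is partition regular over `X`: `r`-regular over `X` for every `r`. -/
def PartitionRegularOver {s k : ℕ} (p : Fin k → MvPolynomial (Fin s) ℚ) (X : Set ℕ) : Prop :=
  ∀ r : ℕ, RRegularOver p X r

/-- `S` is multiplicatively `F`-syndetic: every positive `n` has some `t ∈ F` with `n*t ∈ S`. -/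
def MultSyndeticWith (F : Finset ℕ) (S : Set ℕ) : Prop :=
  ∀ n : ℕ, 0 < n → ∃ t ∈ F, n * t ∈ S

/-- `S` is multiplicatively syndetic: multiplicatively `F`-syndetic for some nonempty
finite set `F` of positive integers. -/
def MultSyndetic (S : Set ℕ) : Prop :=
  ∃ F : Finset ℕ, F.Nonempty ∧ (∀ t ∈ F, 0 < t) ∧ MultSyndeticWith F S

/-- `T` is multiplicatively thick: every finite set of positive integers has a dilate inside `T`. -/
def MultThick (T : Set ℕ) : Prop :=
  ∀ F : Finset ℕ, (∀ t ∈ F, 0 < t) → ∃ n : ℕ, 0 < n ∧ ∀ t ∈ F, n * t ∈ T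

/-!
Given a multiplicatively `F`-syndetic set `S` and a colouring `χ`, colour each `n` by a
witness `t ∈ F` with `n * t ∈ S` together with the colour `χ (n * t)`. A monochromatic solution
`x` for this finer colouring shares one witness `t`, and by dilation invariance `t • x` is a
monochromatic solution inside `S`. The converse directions hold because solutions are positive
and the positive integers form a syndetic set.
-/

variable {s k : ℕ} {p : Fin k → MvPolynomial (Fin s) ℚ}

theorem IsSolution.mul_right (hdil : DilationInvariant p) {x : Fin s → ℕ}
    (hx : IsSolution p x) {t : ℕ} (ht : 0 < t) : IsSolution p (fun i => x i * t) := by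
  refine ⟨fun i => Nat.mul_pos (hx.1 i) ht, fun j => ?_⟩
  simpa only [Nat.cast_mul, mul_comm] using hdil _ hx.2 t j

theorem IsNontrivial.mul_right {x : Fin s → ℕ} (hx : IsNontrivial x) {t : ℕ} (ht : 0 < t) :
    IsNontrivial (fun i => x i * t) :=
  let ⟨i, j, hij⟩ := hx
  ⟨i, j, fun h => hij (Nat.eq_of_mul_eq_mul_right ht h)⟩

theorem RRegularOver.exists_monochromatic {α : Type*} [Fintype α] {X : Set ℕ}
    (h : RRegularOver p X (Fintype.card α)) (χ : ℕ → α) :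
    ∃ x : Fin s → ℕ, IsSolution p x ∧ IsNontrivial x ∧
      (∀ i, x i ∈ X) ∧ ∀ i j, χ (x i) = χ (x j) := by
  obtain ⟨x, hsol, hnt, hX, hmono⟩ := h (Fintype.equivFin α ∘ χ)
  exact ⟨x, hsol, hnt, hX, fun i j => (Fintype.equivFin α).injective (hmono i j)⟩

theorem PartitionRegularOver.positive {X : Set ℕ} (h : PartitionRegularOver p X) :
    PartitionRegularOver p {n | 0 < n} := fun r χ =>
  let ⟨x, hsol, hnt, _, hmono⟩ := h r χ
  ⟨x, hsol, hnt, hsol.1, hmono⟩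

theorem multSyndetic_setOf_pos : MultSyndetic {n | 0 < n} :=
  ⟨{1}, Finset.singleton_nonempty 1, by simp, fun n hn => ⟨1, by simp, by simpa using hn⟩⟩

theorem MultSyndeticWith.exists_witness {F : Finset ℕ} {S : Set ℕ} (hS : MultSyndeticWith F S) :
    ∃ τ : ℕ → F, ∀ n, 0 < n → n * τ n ∈ S := by
  classical
  obtain ⟨t₀, ht₀, -⟩ := hS 1 one_pos
  refine ⟨fun n => if hn : 0 < n then ⟨(hS n hn).choose, (hS n hn).choose_spec.1⟩
    else ⟨t₀, ht₀⟩, fun n hn => ?_⟩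
  simpa only [dif_pos hn] using (hS n hn).choose_spec.2

theorem MultSyndeticWith.rRegularOver (hdil : DilationInvariant p) {F : Finset ℕ} {S : Set ℕ}
    (hF : ∀ t ∈ F, 0 < t) (hS : MultSyndeticWith F S) {r : ℕ}
    (h : RRegularOver p {n | 0 < n} (F.card * r)) : RRegularOver p S r := by
  intro χ
  obtain ⟨τ, hτ⟩ := hS.exists_witness
  have hcard : Fintype.card (F × Fin r) = F.card * r := by simp
  obtain ⟨x, hsol, hnt, -, hmono⟩ :=
    (hcard ▸ h).exists_monochromatic fun n => (τ n, χ (n * τ n))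
  obtain ⟨i₀, -⟩ := id hnt
  have hτx : ∀ i, τ (x i) = τ (x i₀) := fun i => (Prod.ext_iff.1 (hmono i i₀)).1
  set t : ℕ := ↑(τ (x i₀))
  have ht : 0 < t := hF t (τ (x i₀)).2
  refine ⟨fun i => x i * t, hsol.mul_right hdil ht, hnt.mul_right ht, fun i => ?_, fun i j => ?_⟩
  · simpa only [hτx i] using hτ (x i) (hsol.1 i)
  · simpa only [hτx i, hτx j] using (Prod.ext_iff.1 (hmono i j)).2

/-- For a dilation invariant system, partition regularity over ℕ,
over every multiplicatively syndetic set, and over some multiplicatively syndetic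
set are all equivalent. -/
theorem partitionRegular_tfae_syndetic {s k : ℕ}
    (p : Fin k → MvPolynomial (Fin s) ℚ) (hdil : DilationInvariant p) :
    List.TFAE
      [PartitionRegularOver p {n : ℕ | 0 < n},
       ∀ S : Set ℕ, MultSyndetic S → PartitionRegularOver p S,
       ∃ S : Set ℕ, MultSyndetic S ∧ PartitionRegularOver p S] := by
  tfae_have 1 → 2 := fun hI _ ⟨_, _, hF, hS⟩ _ => hS.rRegularOver hdil hF (hI _)
  tfae_have 2 → 3 := fun h => ⟨_, multSyndetic_setOf_pos, h _ multSyndetic_setOf_pos⟩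
  tfae_have 3 → 1 := fun ⟨_, _, h⟩ => h.positive
  tfae_finish
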